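/- Let W be a set of words determining a variety 𝔚 different from the variety of all groups (i.e., W contains a word w ≠ 1), and let V be a nontrivial set of words. Then there exist infinitely many pairwise non-isomorphic finite groups H such that H does not satisfy the laws W (that is, some homomorphism from the free group on countably many generators to H maps some element of W to a non-identity element) and such that there exists a finite group G with a subnormal subgroup H̃ isomorphic to H contained in the verbal subgroup V(G). -/

import Mathlib

lemma extend_perm {α : Type*} [Fintype α] [DecidableEq α] (f : α → α) (p : α → Prop)
    [DecidablePred p] (hinj : ∀ a b, p a → p b → f a = f b → a = b) :
    ∃ σ : Equiv.Perm α, ∀ a, p a → σ a = f a := by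
  classical
  let q : α → Prop := fun b => ∃ a, p a ∧ f a = b
  let g : {a // p a} → {b // q b} := fun a => ⟨f a.1, a.1, a.2, rfl⟩
  have hg : Function.Bijective g := by
    constructor
    · rintro ⟨a, ha⟩ ⟨b, hb⟩ h
      simpa using hinj a b ha hb (by simpa [g] using h)
    · rintro ⟨b, a, ha, rfl⟩
      exact ⟨⟨a, ha⟩, rfl⟩
  let e₁ := Equiv.ofBijective g hg
  have hcard : Fintype.card {a // ¬ p a} = Fintype.card {b // ¬ q b} := by
    rw [Fintype.card_subtype_compl, Fintype.card_subtype_compl, Fintype.card_congr e₁]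
  refine ⟨(Equiv.sumCompl p).symm.trans ((Equiv.sumCongr e₁ (Fintype.equivOfCardEq hcard)).trans
    (Equiv.sumCompl q)), fun a ha => ?_⟩
  rw [Equiv.trans_apply, Equiv.trans_apply, Equiv.sumCompl_symm_apply_of_pos ha,
    Equiv.sumCongr_apply, Sum.map_inl, Equiv.sumCompl_apply_inl]
  rfl

open FreeGroup in
/-- non-cancelling adjacency relation -/
def NC {α : Type*} (a b : α × Bool) : Prop := ¬(a.1 = b.1 ∧ a.2 = !b.2)

open FreeGroup in
lemma reduce_eq_self_of_chain' {α : Type*} [DecidableEq α] {L : List (α × Bool)}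
    (h : List.Chain' NC L) : reduce L = L := by
  induction L with
  | nil => rfl
  | cons x L ih =>
    rw [reduce.cons, ih h.tail]
    cases L with
    | nil => rfl
    | cons hd tl =>
      have : NC x hd := (List.isChain_cons_cons.mp h).1
      simp only [NC] at this
      dsimp only
      rw [if_neg this]

lemma exists_not_chain' {α : Type*} {R : α → α → Prop} :
    ∀ {L : List α}, ¬ List.Chain' R L → ∃ L₁ a b L₂, L = L₁ ++ a :: b :: L₂ ∧ ¬ R a b
  | [], h => absurd List.isChain_nil h
  | [a], h => absurd (List.isChain_singleton a) h
  | a :: b :: L, h => by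
    unfold List.Chain' at h
    rw [List.isChain_cons_cons] at h
    by_cases hr : R a b
    · obtain ⟨L₁, c, d, L₂, hEq, hcd⟩ := exists_not_chain' (fun hc => h ⟨hr, hc⟩)
      exact ⟨a :: L₁, c, d, L₂, by rw [hEq]; rfl, hcd⟩
    · exact ⟨[], a, b, L, rfl, hr⟩

open FreeGroup in
lemma chain'_of_reduce_eq_self {α : Type*} [DecidableEq α] {L : List (α × Bool)}
    (h : reduce L = L) : List.Chain' NC L := by
  by_contra hc
  obtain ⟨L₁, a, b, L₂, hEq, hab⟩ := exists_not_chain' hc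
  simp only [NC, not_not] at hab
  obtain ⟨h1, h2⟩ := hab
  have hb : b = (a.1, !a.2) := Prod.ext h1.symm (by rw [h2, Bool.not_not])
  apply @FreeGroup.reduce.not α _ _ L L₁ L₂ a.1 a.2
  rw [h, hEq, ← hb]

open FreeGroup in
lemma chain'_toWord {α : Type*} [DecidableEq α] (x : FreeGroup α) :
    List.Chain' NC x.toWord :=
  chain'_of_reduce_eq_self (reduce_toWord x)

open FreeGroup in
lemma exists_perm_hom {w : FreeGroup ℕ} (hw : w ≠ 1) :
    ∃ (N : ℕ) (φ : FreeGroup ℕ →* Equiv.Perm (Fin (N + 1))), φ w ≠ 1 := by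
  classical
  set l := w.toWord with hl
  have hnil : l ≠ [] := fun h => hw (toWord_eq_nil_iff.mp h)
  set n := l.length with hn
  have hn0 : 0 < n := List.length_pos_iff.mpr hnil
  have hchain : List.Chain' NC l := chain'_toWord w
  -- no adjacent cancelling pair, in getElem? form
  have hred2 : ∀ (k : ℕ) (g : ℕ) (b : Bool),
      l[k]? = some (g, b) → l[k + 1]? = some (g, !b) → False := by
    intro k g b h1 h2
    obtain ⟨hk1, he1⟩ := List.getElem?_eq_some_iff.mp h1
    obtain ⟨hk2, he2⟩ := List.getElem?_eq_some_iff.mp h2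
    have := List.isChain_iff_getElem.mp hchain k (by omega)
    simp only [he1, he2] at this
    exact this ⟨rfl, by simp⟩
  -- the partial maps
  set c1 : ℕ → Fin (n + 1) → Prop := fun g x => 1 ≤ x.val ∧ l[x.val - 1]? = some (g, true)
    with hc1
  set c2 : ℕ → Fin (n + 1) → Prop := fun g x => l[x.val]? = some (g, false) with hc2
  set f : ℕ → Fin (n + 1) → Fin (n + 1) := fun g x =>
    if c1 g x then ⟨x.val - 1, by omega⟩
    else if h : c2 g x then ⟨x.val + 1, by
      have := (List.getElem?_eq_some_iff.mp h).1; omega⟩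
    else x with hf
  have hf1 : ∀ g x, c1 g x → (f g x).val = x.val - 1 := by
    intro g x h; simp only [hf, if_pos h]
  have hf2 : ∀ g x, ¬ c1 g x → c2 g x → (f g x).val = x.val + 1 := by
    intro g x h h2; simp only [hf, if_neg h, dif_pos h2]
  have hinj : ∀ g a b, (c1 g a ∨ c2 g a) → (c1 g b ∨ c2 g b) → f g a = f g b → a = b := by
    intro g a b ha hb hfab
    apply Fin.ext
    have hva : (f g a).val = (f g b).val := by rw [hfab]
    by_cases h1a : c1 g a <;> by_cases h1b : c1 g b
    · rw [hf1 g a h1a, hf1 g b h1b] at hva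
      have := h1a.1; have := h1b.1; omega
    · have h2b : c2 g b := hb.resolve_left h1b
      rw [hf1 g a h1a, hf2 g b h1b h2b] at hva
      exfalso
      refine hred2 b.val g false h2b ?_
      have h2 := h1a.2
      rw [hva] at h2
      simpa using h2
    · have h2a : c2 g a := ha.resolve_left h1a
      rw [hf2 g a h1a h2a, hf1 g b h1b] at hva
      exfalso
      refine hred2 a.val g false h2a ?_
      have h2 := h1b.2
      rw [← hva] at h2
      simpa using h2
    · have h2a : c2 g a := ha.resolve_left h1a
      have h2b : c2 g b := hb.resolve_left h1b
      rw [hf2 g a h1a h2a, hf2 g b h1b h2b] at hva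
      omega
  choose σ hσ using fun g => extend_perm (f g) (fun x => c1 g x ∨ c2 g x) (hinj g)
  -- key pointwise property
  have key : ∀ (k : ℕ) (hk : k < n) (g : ℕ) (b : Bool), l[k]? = some (g, b) →
      (cond b (σ g) (σ g)⁻¹) ⟨k + 1, by omega⟩ = ⟨k, by omega⟩ := by
    intro k hk g b hkg
    cases b with
    | true =>
      have hc : c1 g ⟨k + 1, by omega⟩ := by
        refine ⟨by simp, ?_⟩
        simpa using hkg
      have := hσ g ⟨k + 1, by omega⟩ (Or.inl hc)
      simp only [cond]
      rw [this]
      apply Fin.ext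
      rw [hf1 g _ hc]
      simp
    | false =>
      have hc : c2 g ⟨k, by omega⟩ := hkg
      have hnc : ¬ c1 g ⟨k, by omega⟩ := by
        rintro ⟨hk1, hkt⟩
        refine hred2 (k - 1) g true hkt ?_
        simpa [Nat.sub_add_cancel hk1] using hkg
      have hs := hσ g ⟨k, by omega⟩ (Or.inr hc)
      simp only [cond]
      rw [Equiv.Perm.inv_def, Equiv.symm_apply_eq, hs]
      apply Fin.ext
      rw [hf2 g _ hnc hc]
  refine ⟨n, FreeGroup.lift σ, fun hone => ?_⟩
  have key2 : ∀ (L₂ L₁ : List (ℕ × Bool)) (h : l = L₁ ++ L₂),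
      (L₂.map fun x => cond x.2 (σ x.1) (σ x.1)⁻¹).prod ⟨n, by omega⟩ =
        ⟨L₁.length, by
          have h2 := congrArg List.length h
          rw [List.length_append] at h2
          omega⟩ := by
    intro L₂
    induction L₂ with
    | nil =>
      intro L₁ h
      rw [List.append_nil] at h
      subst h
      simp [hn]
    | cons a L₂ ih =>
      intro L₁ h
      have h' : l = (L₁ ++ [a]) ++ L₂ := by rw [h, List.append_assoc]; rfl
      have hklt : L₁.length < n := by
        have h2 := congrArg List.length h
        rw [List.length_append] at h2
        simp at h2
        omega
      have hka : l[L₁.length]? = some a := by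
        rw [h, List.getElem?_append_right (le_refl _)]
        simp
      have := ih (L₁ ++ [a]) h'
      rw [List.map_cons, List.prod_cons, Equiv.Perm.mul_apply, this]
      have hlen : (L₁ ++ [a]).length = L₁.length + 1 := by simp
      have := key L₁.length hklt a.1 a.2 (by simpa using hka)
      convert this using 2
      exact Fin.ext hlen
  have hw1 : (FreeGroup.lift σ) w = (List.map (fun x => cond x.2 (σ x.1) (σ x.1)⁻¹) l).prod := by
    conv_lhs => rw [← FreeGroup.mk_toWord (x := w)]
    rw [FreeGroup.lift_mk]
  have h0 := key2 l [] rfl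
  rw [← hw1, hone] at h0
  have hcon : n = 0 := by
    have := congrArg Fin.val h0
    simpa using this
  omega

open FreeGroup in
lemma chain'_invRev {α : Type*} {L : List (α × Bool)} (h : List.Chain' NC L) :
    List.Chain' NC (invRev L) := by
  unfold List.Chain' at h ⊢
  rw [invRev, List.isChain_reverse, List.isChain_map]
  refine h.imp ?_
  rintro ⟨a, ab⟩ ⟨b, bb⟩ hab
  simp only [NC, flip] at hab ⊢
  rintro ⟨h1, h2⟩
  refine hab ⟨h1.symm, ?_⟩
  revert h2
  cases ab <;> cases bb <;> decide

open FreeGroup in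
lemma prodOfMk {α : Type*} : ∀ (Ws : List (List (α × Bool))),
    (Ws.map FreeGroup.mk).prod = FreeGroup.mk Ws.flatten
  | [] => by simp [← FreeGroup.one_eq_mk]
  | X :: Ws => by
    rw [List.map_cons, List.prod_cons, prodOfMk Ws, FreeGroup.mul_mk, List.flatten_cons]

open FreeGroup in
lemma subst_ne_one {w v : FreeGroup ℕ} (hw : w ≠ 1) (hv : v ≠ 1) :
    ∃ (s : ℕ → ℕ → ℕ) (t : ℕ → ℕ),
      (FreeGroup.lift (fun i => (FreeGroup.map (s i) v) *
        (FreeGroup.of (t i) * (FreeGroup.map (s i) v) * (FreeGroup.of (t i))⁻¹))) w ≠ 1 := by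
  classical
  set Lv := v.toWord with hLv
  have hvnil : Lv ≠ [] := fun h => hv (toWord_eq_nil_iff.mp h)
  obtain ⟨hd, tl, hLvc⟩ := List.exists_cons_of_ne_nil hvnil
  set K : ℕ := (Lv.map Prod.fst).sum + 1 with hKdef
  have hK : ∀ p ∈ Lv, p.1 < K := by
    intro p hp
    have : p.1 ≤ (Lv.map Prod.fst).sum :=
      List.single_le_sum (fun x _ => Nat.zero_le x) _ (List.mem_map_of_mem hp)
    omega
  have hhdK : hd.1 < K := hK hd (by rw [hLvc]; exact List.mem_cons_self)
  have hblock : ∀ i j i' j', j ≤ K → j' ≤ K → (K+1)*i + j = (K+1)*i' + j' →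
      i = i' ∧ j = j' := by
    intro i j i' j' hj hj' heq
    have h1 : ((K+1)*i + j) % (K+1) = j := by
      rw [Nat.mul_add_mod, Nat.mod_eq_of_lt (by omega)]
    have h2 : ((K+1)*i' + j') % (K+1) = j' := by
      rw [Nat.mul_add_mod, Nat.mod_eq_of_lt (by omega)]
    have hjj : j = j' := by rw [← h1, ← h2, heq]
    subst hjj
    refine ⟨?_, rfl⟩
    have : (K+1)*i = (K+1)*i' := by omega
    exact Nat.eq_of_mul_eq_mul_left (by omega) this
  set s : ℕ → ℕ → ℕ := fun i j => (K+1) * i + j with hs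
  set t : ℕ → ℕ := fun i => (K+1) * i + K with ht
  set π : ℕ → (ℕ × Bool) → (ℕ × Bool) := fun i p => (s i p.1, p.2) with hπ
  set L : ℕ → List (ℕ × Bool) := fun i => Lv.map (π i) with hL
  set B : ℕ → List (ℕ × Bool) :=
    fun i => L i ++ (t i, true) :: (L i ++ [(t i, false)]) with hB
  have hLne : ∀ i, L i ≠ [] := fun i h => hvnil (List.map_eq_nil_iff.mp h)
  have hLmem : ∀ i x, x ∈ L i → ∃ j, j < K ∧ x.1 = (K+1)*i + j := by
    intro i x hx
    rw [hL, List.mem_map] at hx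
    obtain ⟨p, hp, rfl⟩ := hx
    exact ⟨p.1, hK p hp, rfl⟩
  have htne : ∀ i x, x ∈ L i → x.1 ≠ t i := by
    intro i x hx
    obtain ⟨j, hj, hxe⟩ := hLmem i x hx
    rw [hxe, ht]
    intro h
    exact absurd (hblock i j i K (by omega) le_rfl h).2 (by omega)
  have hLchain : ∀ i, List.Chain' NC (L i) := by
    intro i
    unfold List.Chain'
    rw [hL, List.isChain_map]
    refine (chain'_toWord v).imp ?_
    intro a b hab
    simp only [NC, hπ, hs] at hab ⊢
    rintro ⟨h1, h2⟩
    exact hab ⟨by omega, h2⟩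
  have hLhead : ∀ i, (L i).head? = some (s i hd.1, hd.2) := by
    intro i
    rw [hL]
    simp only [List.head?_map, hLvc, List.head?_cons, Option.map_some]
    rfl
  have hBhead : ∀ i, (B i).head? = some (s i hd.1, hd.2) := by
    intro i
    rw [hB]
    dsimp only
    rw [List.head?_append_of_ne_nil _ (hLne i), hLhead i]
  have hBconcat : ∀ i, B i = (L i ++ (t i, true) :: L i) ++ [(t i, false)] := by
    intro i; rw [hB]; simp
  have hBlast : ∀ i, (B i).getLast? = some (t i, false) := by
    intro i; rw [hBconcat i, List.getLast?_concat]
  have hBchain : ∀ i, List.Chain' NC (B i) := by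
    intro i
    rw [hB]
    have hchainL1 : List.Chain' NC (L i ++ [(t i, false)]) := by
      refine List.IsChain.append (hLchain i) (List.isChain_singleton _) ?_
      rintro x hx y hy
      simp only [List.head?_cons, Option.mem_def, Option.some_inj] at hy
      subst hy
      rintro ⟨h1, -⟩
      exact htne i x (List.mem_of_mem_getLast? hx) h1
    have hchainS : List.Chain' NC ((t i, true) :: (L i ++ [(t i, false)])) := by
      refine List.isChain_cons.mpr ⟨?_, hchainL1⟩
      intro y hy
      rw [List.head?_append_of_ne_nil _ (hLne i), hLhead i] at hy
      simp only [Option.mem_def, Option.some_inj] at hy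
      subst hy
      rintro ⟨h1, -⟩
      exact absurd (hblock i K i hd.1 le_rfl (by omega) h1).2 (by omega)
    refine List.IsChain.append (hLchain i) hchainS ?_
    rintro x hx y hy
    simp only [List.head?_cons, Option.mem_def, Option.some_inj] at hy
    subst hy
    rintro ⟨h1, -⟩
    exact htne i x (List.mem_of_mem_getLast? hx) h1
  set neg : (ℕ × Bool) → (ℕ × Bool) := fun p => (p.1, !p.2) with hneg
  have hIBhead : ∀ i, (invRev (B i)).head? = some (t i, true) := by
    intro i
    rw [invRev, List.head?_reverse, hBconcat i, List.map_append]
    simp only [List.map_cons, List.map_nil]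
    rw [List.getLast?_concat]
    simp
  have hIBlast : ∀ i, (invRev (B i)).getLast? = some (s i hd.1, !hd.2) := by
    intro i
    rw [invRev, List.getLast?_reverse, List.head?_map, hBhead i]
    rfl
  set Bl : (ℕ × Bool) → List (ℕ × Bool) := fun p => cond p.2 (B p.1) (invRev (B p.1))
    with hBl
  have hBlne : ∀ p, Bl p ≠ [] := by
    rintro ⟨i, b⟩ h
    cases b
    · have hh := hIBhead i
      rw [hBl] at h
      simp only [cond] at h
      rw [h] at hh
      simp at hh
    · have hh := hBhead i
      rw [hBl] at h
      simp only [cond] at h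
      rw [h] at hh
      simp at hh
  have hBlchain : ∀ p, List.Chain' NC (Bl p) := by
    rintro ⟨i, b⟩
    cases b
    · exact chain'_invRev (hBchain i)
    · exact hBchain i
  have hjun : ∀ a b : ℕ × Bool, NC a b →
      ∀ x ∈ (Bl a).getLast?, ∀ y ∈ (Bl b).head?, NC x y := by
    rintro ⟨i, ba⟩ ⟨i', bb⟩ hab x hx y hy
    cases ba <;> cases bb <;>
      simp only [hBl, cond, hIBhead, hIBlast, hBhead, hBlast, Option.mem_def,
        Option.some_inj] at hx hy <;> subst hx <;> subst hy
    · -- a = (i,false), b = (i',false): x = (s i hd.1, !hd.2), y = (t i', true)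
      rintro ⟨h1, -⟩
      exact absurd (hblock i hd.1 i' K (by omega) le_rfl h1).2 (by omega)
    · -- a = (i,false), b = (i',true): x = (s i hd.1, !hd.2), y = (s i' hd.1, hd.2)
      rintro ⟨h1, -⟩
      have := (hblock i hd.1 i' hd.1 (by omega) (by omega) h1).1
      subst this
      exact hab ⟨rfl, by simp⟩
    · -- a = (i,true), b = (i',false): x = (t i, false), y = (t i', true)
      rintro ⟨h1, -⟩
      have := (hblock i K i' K le_rfl le_rfl h1).1
      subst this
      exact hab ⟨rfl, by simp⟩
    · -- a = (i,true), b = (i',true): x = (t i, false), y = (s i' hd.1, hd.2)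
      rintro ⟨h1, -⟩
      exact absurd (hblock i K i' hd.1 le_rfl (by omega) h1).2 (by omega)
  -- the substitution elements
  set u : ℕ → FreeGroup ℕ := fun i => (FreeGroup.map (s i) v) *
    (FreeGroup.of (t i) * (FreeGroup.map (s i) v) * (FreeGroup.of (t i))⁻¹) with hu
  have hmapv : ∀ i, FreeGroup.map (s i) v = mk (L i) := by
    intro i
    conv_lhs => rw [← FreeGroup.mk_toWord (x := v)]
    rw [FreeGroup.map.mk]
  have hof : ∀ i, FreeGroup.of (t i) = mk [(t i, true)] := fun _ => rfl
  have hofinv : ∀ i, (FreeGroup.of (t i))⁻¹ = mk [(t i, false)] := by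
    intro i
    rw [hof, FreeGroup.inv_mk]
    rfl
  have huB : ∀ i, u i = mk (B i) := by
    intro i
    rw [hu]
    dsimp only
    rw [hmapv, hofinv, hof, FreeGroup.mul_mk, FreeGroup.mul_mk, FreeGroup.mul_mk, hB]
    simp
  have huBl : ∀ p : ℕ × Bool, (cond p.2 (u p.1) (u p.1)⁻¹) = mk (Bl p) := by
    rintro ⟨i, b⟩
    cases b
    · simp only [cond, hBl]
      rw [huB, FreeGroup.inv_mk]
    · simp only [cond, hBl]
      rw [huB]
  -- w side
  set Lw := w.toWord with hLw
  have hwnil : Lw ≠ [] := fun h => hw (toWord_eq_nil_iff.mp h)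
  refine ⟨s, t, fun hone => ?_⟩
  have hlw : (FreeGroup.lift u) w = mk ((Lw.map Bl).flatten) := by
    conv_lhs => rw [← FreeGroup.mk_toWord (x := w)]
    rw [FreeGroup.lift_mk]
    have : (Lw.map fun x => cond x.2 (u x.1) (u x.1)⁻¹) = (Lw.map Bl).map mk := by
      rw [List.map_map]
      exact List.map_congr_left fun p _ => huBl p
    rw [← hLw, this, prodOfMk]
  have hflatchain : List.Chain' NC ((Lw.map Bl).flatten) := by
    unfold List.Chain'
    rw [List.isChain_flatten (by
      intro hmem
      rw [List.mem_map] at hmem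
      obtain ⟨p, -, hp⟩ := hmem
      exact hBlne p hp)]
    constructor
    · intro bl hbl
      rw [List.mem_map] at hbl
      obtain ⟨p, -, rfl⟩ := hbl
      exact hBlchain p
    · rw [List.isChain_map]
      exact (chain'_toWord w).imp fun a b hab => hjun a b hab
  have hflatnil : (Lw.map Bl).flatten ≠ [] := by
    intro h
    rw [List.flatten_eq_nil_iff] at h
    obtain ⟨p, pt, hpc⟩ := List.exists_cons_of_ne_nil hwnil
    exact hBlne p (h (Bl p) (by rw [hpc]; simp))
  apply hflatnil
  have : ((FreeGroup.lift u) w).toWord = (Lw.map Bl).flatten := by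
    rw [hlw, FreeGroup.toWord_mk, reduce_eq_self_of_chain' hflatchain]
  rw [← this, hone]
  simp

/-- The verbal subgroup `V(G)` of a group `G` determined by a set `V` of words. -/
def verbalSubgroup (G : Type*) [Group G] (V : Set (FreeGroup ℕ)) : Subgroup G :=
  Subgroup.closure {g | ∃ w ∈ V, ∃ φ : FreeGroup ℕ →* G, φ w = g}

/-- A group `K` satisfies the laws `W` if every homomorphism from the free group on
countably many generators to `K` maps every element of `W` to the identity. -/
def SatisfiesLaws (K : Type*) [Group K] (W : Set (FreeGroup ℕ)) : Prop :=
  ∀ φ : FreeGroup ℕ →* K, ∀ w ∈ W, φ w = 1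

/-- A subgroup `K ≤ G` is subnormal: there is a finite chain
`K = K₀ ⊴ K₁ ⊴ ⋯ ⊴ Kₙ = G` with each term normal in the next. -/
def IsSubnormalSubgroup {G : Type*} [Group G] (K : Subgroup G) : Prop :=
  ∃ (n : ℕ) (c : Fin (n + 1) → Subgroup G),
    c 0 = K ∧ c (Fin.last n) = ⊤ ∧
      ∀ i : Fin n, c i.castSucc ≤ c i.succ ∧ ((c i.castSucc).subgroupOf (c i.succ)).Normal

lemma verbal_normal (G : Type*) [Group G] (V : Set (FreeGroup ℕ)) :
    (verbalSubgroup G V).Normal := by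
  constructor
  intro x hx g
  have hsub : (MulAut.conj g).toMonoidHom ''
      {h | ∃ w ∈ V, ∃ φ : FreeGroup ℕ →* G, φ w = h} ⊆
      {h | ∃ w ∈ V, ∃ φ : FreeGroup ℕ →* G, φ w = h} := by
    rintro _ ⟨y, ⟨w, hw, φ, rfl⟩, rfl⟩
    exact ⟨w, hw, (MulAut.conj g).toMonoidHom.comp φ, rfl⟩
  have : (verbalSubgroup G V).map (MulAut.conj g).toMonoidHom ≤ verbalSubgroup G V := by
    rw [verbalSubgroup, MonoidHom.map_closure]
    exact Subgroup.closure_mono hsub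
  exact this ⟨x, hx, rfl⟩

lemma verbal_pi_le {n : ℕ} (G : Type) [Group G] (V : Set (FreeGroup ℕ)) :
    Subgroup.pi Set.univ (fun _ : Fin (n + 1) => verbalSubgroup G V) ≤
      verbalSubgroup (Fin (n + 1) → G) V := by
  intro g hg
  classical
  apply Subgroup.pi_mem_of_mulSingle_mem
  intro i
  have hmap : (verbalSubgroup G V).map (MonoidHom.mulSingle (fun _ : Fin (n+1) => G) i) ≤
      verbalSubgroup (Fin (n + 1) → G) V := by
    rw [verbalSubgroup, MonoidHom.map_closure]
    apply Subgroup.closure_mono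
    rintro _ ⟨y, ⟨w, hw, φ, rfl⟩, rfl⟩
    exact ⟨w, hw, (MonoidHom.mulSingle (fun _ : Fin (n+1) => G) i).comp φ, rfl⟩
  exact hmap ⟨g i, hg i (Set.mem_univ i), rfl⟩

lemma pi_normal {n : ℕ} {G : Type} [Group G] {B : Subgroup G} (hB : B.Normal) :
    (Subgroup.pi Set.univ (fun _ : Fin (n + 1) => B)).Normal := by
  constructor
  intro x hx g
  rw [Subgroup.mem_pi] at hx ⊢
  intro i hi
  simpa using hB.conj_mem (x i) (hx i hi) (g i)

/-- the equivalence between a power of a subgroup and the pi subgroup -/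
noncomputable def piSubgroupEquiv {n : ℕ} {G : Type} [Group G] (B : Subgroup G) :
    (Fin (n + 1) → ↥B) ≃* ↥(Subgroup.pi Set.univ (fun _ : Fin (n + 1) => B)) where
  toFun f := ⟨fun i => (f i : G), by
    rw [Subgroup.mem_pi]; intro i _; exact (f i).2⟩
  invFun x := fun i => ⟨x.1 i, ((Subgroup.mem_pi Set.univ).mp x.2) i (Set.mem_univ i)⟩
  left_inv f := rfl
  right_inv x := rfl
  map_mul' f g := rfl

theorem infinitely_many_finite_groups_outside_variety_with_subnormal_verbal_embedding
    (W : Set (FreeGroup ℕ)) (hW : ∃ w ∈ W, w ≠ 1)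
    (V : Set (FreeGroup ℕ)) (hV : ∃ w ∈ V, w ≠ 1) :
    ∃ Hs : ℕ → GrpCat.{0},
      (∀ n, Finite ↥(Hs n)) ∧
      (∀ m n : ℕ, m ≠ n → ¬ Nonempty (↥(Hs m) ≃* ↥(Hs n))) ∧
      ∀ n, ¬ SatisfiesLaws ↥(Hs n) W ∧
        ∃ G : GrpCat.{0}, Finite ↥G ∧
          ∃ Htilde : Subgroup ↥G, IsSubnormalSubgroup Htilde ∧
            Nonempty (↥(Hs n) ≃* ↥Htilde) ∧ Htilde ≤ verbalSubgroup ↥G V := by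
  classical
  obtain ⟨w, hwW, hw⟩ := hW
  obtain ⟨v, hvV, hv⟩ := hV
  obtain ⟨s, t, hst⟩ := subst_ne_one hw hv
  set u : ℕ → FreeGroup ℕ := fun i => (FreeGroup.map (s i) v) *
    (FreeGroup.of (t i) * (FreeGroup.map (s i) v) * (FreeGroup.of (t i))⁻¹) with hu
  obtain ⟨N, χ, hχ⟩ := exists_perm_hom hst
  set G₀ := Equiv.Perm (Fin (N + 1)) with hG₀
  set φ₀ : FreeGroup ℕ →* G₀ := χ.comp (FreeGroup.lift u) with hφ₀
  have hφ₀w : φ₀ w ≠ 1 := by simpa [hφ₀] using hχ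
  set Bs : Subgroup G₀ := verbalSubgroup G₀ V with hBs
  have hofmem : ∀ i, φ₀ (FreeGroup.of i) ∈ Bs := by
    intro i
    have h1 : χ (FreeGroup.map (s i) v) ∈ Bs := by
      apply Subgroup.subset_closure
      exact ⟨v, hvV, χ.comp (FreeGroup.map (s i)), rfl⟩
    have h2 : χ (FreeGroup.of (t i) * FreeGroup.map (s i) v * (FreeGroup.of (t i))⁻¹) ∈ Bs := by
      apply Subgroup.subset_closure
      refine ⟨v, hvV,
        χ.comp ((MulAut.conj (FreeGroup.of (t i))).toMonoidHom.comp (FreeGroup.map (s i))), ?_⟩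
      simp [MulAut.conj_apply]
    have : φ₀ (FreeGroup.of i) = χ (FreeGroup.map (s i) v) *
        χ (FreeGroup.of (t i) * FreeGroup.map (s i) v * (FreeGroup.of (t i))⁻¹) := by
      rw [hφ₀]
      simp only [MonoidHom.comp_apply, FreeGroup.lift_apply_of, hu, map_mul]
    rw [this]
    exact mul_mem h1 h2
  have hall : ∀ x, φ₀ x ∈ Bs := by
    intro x
    refine FreeGroup.induction_on x (by simpa using one_mem Bs) (fun i => hofmem i)
      (fun i hi => by rw [map_inv]; exact inv_mem hi)
      (fun a b ha hb => by rw [map_mul]; exact mul_mem ha hb)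
  set ψ : FreeGroup ℕ →* ↥Bs := φ₀.codRestrict Bs hall with hψ
  have hψw : ψ w ≠ 1 := by
    intro h
    apply hφ₀w
    have := congrArg (Subtype.val) h
    simpa [hψ] using this
  have hBnontriv : Nontrivial ↥Bs := ⟨⟨ψ w, 1, hψw⟩⟩
  have hfinB : Finite ↥Bs := inferInstance
  have hcard : 2 ≤ Nat.card ↥Bs := Finite.one_lt_card_iff_nontrivial.mpr hBnontriv
  refine ⟨fun n => GrpCat.of (Fin (n + 1) → ↥Bs),
    fun n => by show Finite (Fin (n + 1) → ↥Bs); exact inferInstance, ?_, ?_⟩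
  · rintro m n hmn ⟨e⟩
    apply hmn
    have hc : Nat.card (Fin (m + 1) → ↥Bs) = Nat.card (Fin (n + 1) → ↥Bs) :=
      Nat.card_congr e.toEquiv
    rw [Nat.card_fun, Nat.card_fun, Nat.card_eq_fintype_card (α := Fin (m + 1)),
      Nat.card_eq_fintype_card (α := Fin (n + 1)), Fintype.card_fin, Fintype.card_fin] at hc
    have := Nat.pow_right_injective hcard hc
    omega
  · intro n
    constructor
    · intro hsat
      have h1 := hsat ((MonoidHom.mulSingle (fun _ : Fin (n + 1) => ↥Bs) 0).comp ψ) w hwW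
      apply hψw
      have h2 := congrFun (congrArg (fun (f : Fin (n+1) → ↥Bs) => f) h1) 0
      have h3 : ((MonoidHom.mulSingle (fun _ : Fin (n + 1) => ↥Bs) 0).comp ψ) w 0 = 1 := h2
      simpa [MonoidHom.mulSingle_apply] using h3
    · refine ⟨GrpCat.of (Fin (n + 1) → G₀),
        by show Finite (Fin (n + 1) → G₀); exact inferInstance,
        Subgroup.pi Set.univ (fun _ => Bs), ?_, ⟨piSubgroupEquiv Bs⟩, verbal_pi_le G₀ V⟩
      refine ⟨1, ![Subgroup.pi Set.univ (fun _ => Bs), ⊤], rfl, rfl, ?_⟩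
      intro i
      fin_cases i
      refine ⟨le_top, ?_⟩
      exact Subgroup.Normal.subgroupOf (pi_normal (verbal_normal G₀ V)) _
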